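/- Consider the discrete-time linear time-varying system x_{t+1} = A_t x_t + B_t u_t + C_t a_t with horizon T, initial set B_δ(θ) for δ > 0 and θ ∈ ℝ^n, and adversary constraint Adv = { a : Σ_{s=0}^{T-1} ‖a_s‖² ≤ b } with budget b ≥ 0. Fix t ∈ {0,…,T} and a control sequence u. If the adversary Gramian W_t = Σ_{s=0}^{t-1} α(t,s+1) C_s C_sᵀ α(t,s+1)ᵀ and the transition matrix α(t,0) are both invertible, then the reachable set at time t decomposes exactly as Reach(B_δ(θ), u, Adv, t) = { ξ(θ, u, 0, t) } ⊕ R_t ⊕ B_t, where R_t = { x : xᵀ W_t^{-1} x ≤ b } is the adversary leverage and B_t = { x : xᵀ (α(t,0) α(t,0)ᵀ)^{-1} x ≤ δ² } is the initialization factor. -/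

import Mathlib

open Finset Matrix Pointwise Metric

noncomputable section

/-- Transition matrix `α(t₁, t₀)`: `α(t₀,t₀) = I`, `α(t₁+1,t₀) = A t₁ * α(t₁,t₀)`. -/
def transMat {n : ℕ} (A : ℕ → Matrix (Fin n) (Fin n) ℝ) : ℕ → ℕ → Matrix (Fin n) (Fin n) ℝ
  | 0, _ => 1
  | t + 1, t0 => if t + 1 ≤ t0 then 1 else A t * transMat A t t0

/-- State `x_t` of the system `x_{t+1} = A_t x_t + B_t u_t + C_t a_t`. -/
def traj {n m l : ℕ} (A : ℕ → Matrix (Fin n) (Fin n) ℝ)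
    (B : ℕ → Matrix (Fin n) (Fin m) ℝ) (C : ℕ → Matrix (Fin n) (Fin l) ℝ)
    (x0 : EuclideanSpace ℝ (Fin n)) (u : ℕ → EuclideanSpace ℝ (Fin m))
    (a : ℕ → EuclideanSpace ℝ (Fin l)) : ℕ → EuclideanSpace ℝ (Fin n)
  | 0 => x0
  | t + 1 => WithLp.toLp 2 ((A t).mulVec (traj A B C x0 u a t) + (B t).mulVec (u t) + (C t).mulVec (a t))

/-!
Variation of constants splits `ξ(x₀, u, a, t)` into the adversary-free state `ξ(θ, u, 0, t)`, the
adversary term `∑ₛ Mₛ aₛ` with `Mₛ = α(t, s+1) Cₛ`, and the initial term `α(t, 0) (x₀ - θ)`; the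
last two terms vary independently. The image of the energy ball `∑ ‖aₛ‖² ≤ b` under
`a ↦ ∑ₛ Mₛ aₛ` is the ellipsoid `xᵀ W⁻¹ x ≤ b` for the Gramian `W = ∑ₛ Mₛ Mₛᵀ`: the input
`pₛ = Mₛᵀ W⁻¹ x` reaches `x` with energy `xᵀ W⁻¹ x`, and is the least-energy input doing so.
The initial term is the same picture for the single map `α(t, 0)` on the ball of radius `δ`.
-/

section Gramian

variable {σ ι κ : Type*} [Fintype ι] [Fintype κ]

def gramian (S : Finset σ) (M : σ → Matrix ι κ ℝ) : Matrix ι ι ℝ :=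
  ∑ s ∈ S, M s * (M s)ᵀ

lemma sum_transpose_mulVec_dotProduct (S : Finset σ) (M : σ → Matrix ι κ ℝ) (y : ι → ℝ)
    (a : σ → κ → ℝ) : ∑ s ∈ S, (M s)ᵀ *ᵥ y ⬝ᵥ a s = y ⬝ᵥ ∑ s ∈ S, M s *ᵥ a s := by
  rw [dotProduct_sum]
  exact sum_congr rfl fun s _ => by rw [mulVec_transpose, dotProduct_mulVec]

lemma sum_mulVec_transpose_mulVec_gramian_inv [DecidableEq ι] {S : Finset σ}
    {M : σ → Matrix ι κ ℝ} (hW : IsUnit (gramian S M)) (x : ι → ℝ) :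
    ∑ s ∈ S, M s *ᵥ (M s)ᵀ *ᵥ (gramian S M)⁻¹ *ᵥ x = x := by
  simp_rw [mulVec_mulVec (v := (gramian S M)⁻¹ *ᵥ x), ← sum_mulVec]
  rw [← gramian, mulVec_mulVec, mul_nonsing_inv _ ((isUnit_iff_isUnit_det _).mp hW), one_mulVec]

theorem dotProduct_gramian_inv_mulVec_le_iff [DecidableEq ι] {S : Finset σ}
    {M : σ → Matrix ι κ ℝ} (hW : IsUnit (gramian S M)) (b : ℝ) (x : ι → ℝ) :
    x ⬝ᵥ (gramian S M)⁻¹ *ᵥ x ≤ b ↔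
      ∃ a : σ → κ → ℝ, ∑ s ∈ S, a s ⬝ᵥ a s ≤ b ∧ ∑ s ∈ S, M s *ᵥ a s = x := by
  set p : σ → κ → ℝ := fun s => (M s)ᵀ *ᵥ (gramian S M)⁻¹ *ᵥ x
  have hp : ∑ s ∈ S, M s *ᵥ p s = x := sum_mulVec_transpose_mulVec_gramian_inv hW x
  have hpa : ∀ a : σ → κ → ℝ, ∑ s ∈ S, M s *ᵥ a s = x →
      ∑ s ∈ S, p s ⬝ᵥ a s = x ⬝ᵥ (gramian S M)⁻¹ *ᵥ x := fun a ha => by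
    rw [sum_transpose_mulVec_dotProduct, ha, dotProduct_comm]
  refine ⟨fun h => ⟨p, (hpa p hp).trans_le h, hp⟩, ?_⟩
  rintro ⟨a, hab, ha⟩
  -- `a - p` is orthogonal to `p`, so `∑ ‖a s - p s‖² = ∑ ‖a s‖² - ∑ ‖p s‖²`.
  have hdev : 0 ≤ ∑ s ∈ S, (a s - p s) ⬝ᵥ (a s - p s) :=
    sum_nonneg fun s _ => by simpa using dotProduct_self_star_nonneg (a s - p s)
  simp only [sub_dotProduct, dotProduct_sub, sum_sub_distrib, dotProduct_comm (a _) (p _),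
    hpa a ha, hpa p hp] at hdev
  linarith

lemma dotProduct_inv_mul_transpose_mulVec_le_iff [DecidableEq ι] {α : Matrix ι ι ℝ}
    (hα : IsUnit α) (r : ℝ) (x : ι → ℝ) :
    x ⬝ᵥ (α * αᵀ)⁻¹ *ᵥ x ≤ r ↔ ∃ d : ι → ℝ, d ⬝ᵥ d ≤ r ∧ α *ᵥ d = x := by
  have hdet : IsUnit α.det := (isUnit_iff_isUnit_det α).mp hα
  rw [Matrix.mul_inv_rev, ← transpose_nonsing_inv, ← mulVec_mulVec, dotProduct_mulVec,
    vecMul_transpose]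
  constructor
  · exact fun h => ⟨α⁻¹ *ᵥ x, h, by rw [mulVec_mulVec, mul_nonsing_inv _ hdet, one_mulVec]⟩
  · rintro ⟨d, hd, rfl⟩
    rwa [mulVec_mulVec, nonsing_inv_mul _ hdet, one_mulVec]

lemma EuclideanSpace.real_norm_sq_eq_dotProduct (x : EuclideanSpace ℝ ι) :
    ‖x‖ ^ 2 = x.ofLp ⬝ᵥ x.ofLp := by
  rw [← real_inner_self_eq_norm_sq, EuclideanSpace.inner_eq_star_dotProduct, star_trivial]

theorem setOf_dotProduct_gramian_inv_le_eq_image [DecidableEq ι] {S S' : Finset σ} (hS : S ⊆ S')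
    {M : σ → Matrix ι κ ℝ} (hW : IsUnit (gramian S M)) (b : ℝ) :
    {x : EuclideanSpace ℝ ι | x.ofLp ⬝ᵥ (gramian S M)⁻¹ *ᵥ x.ofLp ≤ b} =
      (fun a : σ → EuclideanSpace ℝ κ => WithLp.toLp 2 (∑ s ∈ S, M s *ᵥ (a s).ofLp)) ''
        {a | ∑ s ∈ S', ‖a s‖ ^ 2 ≤ b} := by
  classical
  ext x
  simp only [Set.mem_ofPred_eq, Set.mem_image, dotProduct_gramian_inv_mulVec_le_iff hW,
    EuclideanSpace.real_norm_sq_eq_dotProduct]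
  constructor
  · rintro ⟨a, hab, hx⟩
    refine ⟨fun s => if s ∈ S then WithLp.toLp 2 (a s) else 0, ?_, ?_⟩
    · calc ∑ s ∈ S', _ = ∑ s ∈ S', if s ∈ S then a s ⬝ᵥ a s else 0 :=
            sum_congr rfl fun s _ => by by_cases hs : s ∈ S <;> simp [hs]
        _ = ∑ s ∈ S, a s ⬝ᵥ a s := by rw [sum_ite_mem, inter_eq_right.mpr hS]
        _ ≤ b := hab
    · rw [← x.toLp_ofLp, ← hx]
      exact congrArg _ (sum_congr rfl fun s hs => by simp [hs])
  · rintro ⟨a, hab, rfl⟩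
    refine ⟨fun s => (a s).ofLp, le_trans ?_ hab, rfl⟩
    exact sum_le_sum_of_subset_of_nonneg hS fun s _ _ => by
      simpa using dotProduct_self_star_nonneg (a s).ofLp

theorem setOf_dotProduct_inv_mul_transpose_le_eq_image [DecidableEq ι] {α : Matrix ι ι ℝ}
    (hα : IsUnit α) (θ : EuclideanSpace ℝ ι) {δ : ℝ} (hδ : 0 ≤ δ) :
    {x : EuclideanSpace ℝ ι | x.ofLp ⬝ᵥ (α * αᵀ)⁻¹ *ᵥ x.ofLp ≤ δ ^ 2} =
      (fun x₀ => WithLp.toLp 2 (α *ᵥ (x₀ - θ).ofLp)) '' closedBall θ δ := by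
  ext x
  simp only [Set.mem_ofPred_eq, Set.mem_image, dotProduct_inv_mul_transpose_mulVec_le_iff hα,
    mem_closedBall_iff_norm, ← sq_le_sq₀ (norm_nonneg _) hδ,
    EuclideanSpace.real_norm_sq_eq_dotProduct]
  constructor
  · rintro ⟨d, hd, hx⟩
    exact ⟨θ + WithLp.toLp 2 d, by simpa using hd, by simp [hx]⟩
  · rintro ⟨x₀, hx₀, rfl⟩
    exact ⟨_, hx₀, rfl⟩

end Gramian

section Trajectory

variable {n m l : ℕ} (A : ℕ → Matrix (Fin n) (Fin n) ℝ) (B : ℕ → Matrix (Fin n) (Fin m) ℝ)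
  (C : ℕ → Matrix (Fin n) (Fin l) ℝ)

lemma transMat_self (t : ℕ) : transMat A t t = 1 := by
  cases t <;> simp [transMat]

lemma transMat_succ_of_le {t t₀ : ℕ} (h : t₀ ≤ t) :
    transMat A (t + 1) t₀ = A t * transMat A t t₀ := by
  rw [transMat, if_neg (by omega)]

lemma sum_range_succ_transMat_mul_mulVec {k : ℕ} (N : ℕ → Matrix (Fin n) (Fin k) ℝ)
    (v : ℕ → Fin k → ℝ) (t : ℕ) :
    ∑ s ∈ range (t + 1), (transMat A (t + 1) (s + 1) * N s) *ᵥ v s =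
      A t *ᵥ ∑ s ∈ range t, (transMat A t (s + 1) * N s) *ᵥ v s + N t *ᵥ v t := by
  rw [sum_range_succ, transMat_self, Matrix.one_mul, mulVec_sum]
  congr 1
  exact sum_congr rfl fun s hs => by
    rw [transMat_succ_of_le A (mem_range.mp hs), Matrix.mul_assoc, mulVec_mulVec]

theorem ofLp_traj (x₀ : EuclideanSpace ℝ (Fin n)) (u : ℕ → EuclideanSpace ℝ (Fin m))
    (a : ℕ → EuclideanSpace ℝ (Fin l)) (t : ℕ) :
    (traj A B C x₀ u a t).ofLp = transMat A t 0 *ᵥ x₀.ofLp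
      + ∑ s ∈ range t, (transMat A t (s + 1) * B s) *ᵥ (u s).ofLp
      + ∑ s ∈ range t, (transMat A t (s + 1) * C s) *ᵥ (a s).ofLp := by
  induction t with
  | zero => simp [traj, transMat]
  | succ t ih =>
    rw [traj, WithLp.ofLp_toLp, ih, sum_range_succ_transMat_mul_mulVec,
      sum_range_succ_transMat_mul_mulVec, transMat_succ_of_le A t.zero_le, ← mulVec_mulVec,
      mulVec_add, mulVec_add]
    abel

theorem traj_eq_nominal_add (x₀ θ : EuclideanSpace ℝ (Fin n))
    (u : ℕ → EuclideanSpace ℝ (Fin m)) (a : ℕ → EuclideanSpace ℝ (Fin l)) (t : ℕ) :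
    traj A B C x₀ u a t = traj A B C θ u (fun _ => 0) t
      + WithLp.toLp 2 (∑ s ∈ range t, (transMat A t (s + 1) * C s) *ᵥ (a s).ofLp)
      + WithLp.toLp 2 (transMat A t 0 *ᵥ (x₀ - θ).ofLp) := by
  apply WithLp.ofLp_injective 2
  simp only [WithLp.ofLp_add, ofLp_traj, WithLp.ofLp_sub, mulVec_sub,
    WithLp.ofLp_zero, mulVec_zero, sum_const_zero]
  abel

end Trajectory

theorem reach_decomposition_general {n m l : ℕ} (A : ℕ → Matrix (Fin n) (Fin n) ℝ)
    (B : ℕ → Matrix (Fin n) (Fin m) ℝ) (C : ℕ → Matrix (Fin n) (Fin l) ℝ)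
    (T : ℕ) (δ : ℝ) (hδ : 0 < δ) (θ : EuclideanSpace ℝ (Fin n))
    (b : ℝ) (t : ℕ) (ht : t ≤ T)
    (u : ℕ → EuclideanSpace ℝ (Fin m))
    (W : Matrix (Fin n) (Fin n) ℝ)
    (hW : W = ∑ s ∈ Finset.range t,
        transMat A t (s + 1) * C s * (C s)ᵀ * (transMat A t (s + 1))ᵀ)
    (hWinv : IsUnit W) (hα : IsUnit (transMat A t 0))
    (Rt Bt : Set (EuclideanSpace ℝ (Fin n)))
    (hRt : Rt = {x : EuclideanSpace ℝ (Fin n) | x.ofLp ⬝ᵥ (W⁻¹).mulVec x.ofLp ≤ b})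
    (hBt : Bt = {x : EuclideanSpace ℝ (Fin n) | x.ofLp ⬝ᵥ ((transMat A t 0 * (transMat A t 0)ᵀ)⁻¹).mulVec x.ofLp ≤ δ ^ 2}) :
    {x : EuclideanSpace ℝ (Fin n) |
        ∃ x0 ∈ Metric.closedBall θ δ, ∃ a : ℕ → EuclideanSpace ℝ (Fin l),
          (∑ s ∈ Finset.range T, ‖a s‖ ^ 2) ≤ b ∧ x = traj A B C x0 u a t} =
      {traj A B C θ u (fun _ => 0) t} + Rt + Bt := by
  have hWgram : W = gramian (range t) fun s => transMat A t (s + 1) * C s := by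
    rw [hW, gramian]
    exact sum_congr rfl fun s _ => by rw [transpose_mul, Matrix.mul_assoc, Matrix.mul_assoc]
  subst hWgram hRt hBt
  rw [setOf_dotProduct_gramian_inv_le_eq_image (range_subset_range.mpr ht) hWinv,
    setOf_dotProduct_inv_mul_transpose_le_eq_image hα θ hδ.le]
  ext x
  simp only [Set.mem_ofPred_eq, Set.mem_add, Set.mem_image]
  constructor
  · rintro ⟨x₀, hx₀, a, ha, rfl⟩
    exact ⟨_, ⟨_, rfl, _, ⟨a, ha, rfl⟩, rfl⟩, _, ⟨x₀, hx₀, rfl⟩,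
      (traj_eq_nominal_add A B C x₀ θ u a t).symm⟩
  · rintro ⟨_, ⟨_, rfl, _, ⟨a, ha, rfl⟩, rfl⟩, _, ⟨x₀, hx₀, rfl⟩, rfl⟩
    exact ⟨x₀, hx₀, a, ha, (traj_eq_nominal_add A B C x₀ θ u a t).symm⟩

/-- Exact decomposition of the reachable set at time `t ≤ T` from the initial
ball `B_δ(θ)` under budget-`b` adversaries: it is the nominal adversary-free
state plus the adversary leverage `R_t` plus the initialization factor `B_t`. -/
theorem reach_decomposition {n m l : ℕ} (A : ℕ → Matrix (Fin n) (Fin n) ℝ)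
    (B : ℕ → Matrix (Fin n) (Fin m) ℝ) (C : ℕ → Matrix (Fin n) (Fin l) ℝ)
    (T : ℕ) (δ : ℝ) (hδ : 0 < δ) (θ : EuclideanSpace ℝ (Fin n))
    (b : ℝ) (hb : 0 ≤ b) (t : ℕ) (ht : t ≤ T)
    (u : ℕ → EuclideanSpace ℝ (Fin m))
    (W : Matrix (Fin n) (Fin n) ℝ)
    (hW : W = ∑ s ∈ Finset.range t,
        transMat A t (s + 1) * C s * (C s)ᵀ * (transMat A t (s + 1))ᵀ)
    (hWinv : IsUnit W) (hα : IsUnit (transMat A t 0))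
    (Rt Bt : Set (EuclideanSpace ℝ (Fin n)))
    (hRt : Rt = {x : EuclideanSpace ℝ (Fin n) | x.ofLp ⬝ᵥ (W⁻¹).mulVec x.ofLp ≤ b})
    (hBt : Bt = {x : EuclideanSpace ℝ (Fin n) | x.ofLp ⬝ᵥ ((transMat A t 0 * (transMat A t 0)ᵀ)⁻¹).mulVec x.ofLp ≤ δ ^ 2}) :
    {x : EuclideanSpace ℝ (Fin n) |
        ∃ x0 ∈ Metric.closedBall θ δ, ∃ a : ℕ → EuclideanSpace ℝ (Fin l),
          (∑ s ∈ Finset.range T, ‖a s‖ ^ 2) ≤ b ∧ x = traj A B C x0 u a t} =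
      {traj A B C θ u (fun _ => 0) t} + Rt + Bt :=
  reach_decomposition_general A B C T δ hδ θ b t ht u W hW hWinv hα Rt Bt hRt hBt
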